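/- arXiv:0910.2737 — 2 statements merged into one kernel-verified Lean document; each statement's English description precedes it below -/
import Mathlib

section
/- A morphism f : n → m in the Temperley-Lieb diagram category D is monic if and only if f has no cups, i.e. no two elements of the top row [n] are paired with each other by f. -/
open Sum Relation

/-- A fixed-point free involution. -/
def FPF {X : Type*} (f : X → X) : Prop :=
  Function.Involutive f ∧ ∀ x, f x ≠ x

/-- Condition (PL1) for `f` with respect to the order on `X`:
if `i < j < f i` then `i < f j < f i`. -/
def PL1 {X : Type*} [Preorder X] (f : X → X) : Prop :=
  ∀ i j, i < j → j < f i → i < f j ∧ f j < f i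

/-- Incomparability `x # y`. -/
def Incomp {X : Type*} [Preorder X] (x y : X) : Prop :=
  ¬ (x ≤ y) ∧ ¬ (y ≤ x)

/-- Condition (PL2): if `f i # i`, `i < j` and `j # f j` then `f i < f j`. -/
def PL2 {X : Type*} [Preorder X] (f : X → X) : Prop :=
  ∀ i j, Incomp (f i) i → i < j → Incomp j (f j) → f i < f j

/-- A planar involution on `[n] ⊕ [m]` (with the disjoint-sum partial order):
a fixed-point free involution satisfying (PL1) and (PL2).  These are the
elements of `P(n, m)`. -/
def Planar {n m : ℕ} (f : Fin n ⊕ Fin m → Fin n ⊕ Fin m) : Prop :=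
  FPF f ∧ PL1 f ∧ PL2 f

/-- The graph relation of a function. -/
def graphRel {X : Type*} (f : X → X) : X → X → Prop := fun x y => f x = y

/-- The execution formula: the Geometry-of-Interaction composite of a relation
`R` on `A ⊕ B` and a relation `S` on `B ⊕ C`, defined componentwise by
`θ_{A,A} = R_{A,A} ∪ R_{A,B};S_{B,B};(R_{B,B};S_{B,B})*;R_{B,A}`,
`θ_{A,C} = R_{A,B};(S_{B,B};R_{B,B})*;S_{B,C}`,
`θ_{C,A} = S_{C,B};(R_{B,B};S_{B,B})*;R_{B,A}`,
`θ_{C,C} = S_{C,C} ∪ S_{C,B};R_{B,B};(S_{B,B};R_{B,B})*;S_{B,C}`. -/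
def ExecR {A B C : Type*} (R : A ⊕ B → A ⊕ B → Prop) (S : B ⊕ C → B ⊕ C → Prop) :
    A ⊕ C → A ⊕ C → Prop :=
  let Raa : A → A → Prop := fun i j => R (Sum.inl i) (Sum.inl j)
  let Rab : A → B → Prop := fun i j => R (Sum.inl i) (Sum.inr j)
  let Rba : B → A → Prop := fun i j => R (Sum.inr i) (Sum.inl j)
  let Rbb : B → B → Prop := fun i j => R (Sum.inr i) (Sum.inr j)
  let Sbb : B → B → Prop := fun i j => S (Sum.inl i) (Sum.inl j)
  let Sbc : B → C → Prop := fun i j => S (Sum.inl i) (Sum.inr j)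
  let Scb : C → B → Prop := fun i j => S (Sum.inr i) (Sum.inl j)
  let Scc : C → C → Prop := fun i j => S (Sum.inr i) (Sum.inr j)
  fun x y =>
    match x, y with
    | Sum.inl i, Sum.inl j =>
        Raa i j ∨
          Relation.Comp Rab
            (Relation.Comp Sbb
              (Relation.Comp (Relation.ReflTransGen (Relation.Comp Rbb Sbb)) Rba)) i j
    | Sum.inl i, Sum.inr j =>
        Relation.Comp Rab
          (Relation.Comp (Relation.ReflTransGen (Relation.Comp Sbb Rbb)) Sbc) i j
    | Sum.inr i, Sum.inl j =>
        Relation.Comp Scb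
          (Relation.Comp (Relation.ReflTransGen (Relation.Comp Rbb Sbb)) Rba) i j
    | Sum.inr i, Sum.inr j =>
        Scc i j ∨
          Relation.Comp Scb
            (Relation.Comp Rbb
              (Relation.Comp (Relation.ReflTransGen (Relation.Comp Sbb Rbb)) Sbc)) i j

/-- The execution-formula composite of two involutions, as a function: for
planar involutions the execution relation is the graph of a function, and
`execFun f g` is that function. -/
noncomputable def execFun {n m p : ℕ} (f : Fin n ⊕ Fin m → Fin n ⊕ Fin m)
    (g : Fin m ⊕ Fin p → Fin m ⊕ Fin p) : Fin n ⊕ Fin p → Fin n ⊕ Fin p :=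
  fun x =>
    @dite _ (∃ y, ExecR (graphRel f) (graphRel g) x y) (Classical.propDecidable _)
      (fun h => h.choose) (fun _ => x)

/-- The partial bijection `Cyc(f,g) = f_{m,m} ; g_{m,m}` on `[m]`:
relational composition of the caps of `f` with the cups of `g`. -/
def Cyc {n m p : ℕ} (f : Fin n ⊕ Fin m → Fin n ⊕ Fin m)
    (g : Fin m ⊕ Fin p → Fin m ⊕ Fin p) : Fin m → Fin m → Prop :=
  Relation.Comp (fun i j => f (Sum.inr i) = Sum.inr j)
    (fun i j => g (Sum.inl i) = Sum.inl j)

/-- Iterated relational composition `r^k` (with `r^0` the identity). -/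
def relPow {α : Type*} (r : α → α → Prop) : ℕ → α → α → Prop
  | 0 => Eq
  | k + 1 => Relation.Comp r (relPow r k)

/-- `i` is a cyclic element of `r`: `r^k i i` for some `k > 0`. -/
def Cyclic {α : Type*} (r : α → α → Prop) (i : α) : Prop :=
  ∃ k, 0 < k ∧ relPow r k i i

/-- The cycle (orbit) of `i` under `r`. -/
def cycleOf {α : Type*} (r : α → α → Prop) (i : α) : Set α :=
  {j | ∃ k, relPow r k i j}

/-- `Z(f,g)`: the number of distinct cycles of `Cyc(f,g)`. -/
noncomputable def Z {n m p : ℕ} (f : Fin n ⊕ Fin m → Fin n ⊕ Fin m)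
    (g : Fin m ⊕ Fin p → Fin m ⊕ Fin p) : ℕ :=
  {S : Set (Fin m) | ∃ i, Cyclic (Cyc f g) i ∧ S = cycleOf (Cyc f g) i}.ncard

/-- A morphism `n → m` of the Temperley-Lieb category: a loop count together
with a function on `[n] ⊕ [m]` (required to be a planar involution for
genuine morphisms). -/
def TLHom (n m : ℕ) : Type :=
  ℕ × (Fin n ⊕ Fin m → Fin n ⊕ Fin m)

/-- Composition in the Temperley-Lieb category:
`(t, g) ∘ (s, f) = (s + t + Z(f,g), f;g)`. -/
noncomputable def TLcomp {n m p : ℕ} (F : TLHom n m) (G : TLHom m p) : TLHom n p :=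
  (F.1 + G.1 + Z F.2 G.2, execFun F.2 G.2)

/-- The identity morphism: zero loops and the twist involution `i ↔ i'`. -/
def tlid (n : ℕ) : TLHom n n :=
  (0, Sum.swap)

/-- `f` has a cup: two top-row elements are paired with each other. -/
def HasCup {n m : ℕ} (f : Fin n ⊕ Fin m → Fin n ⊕ Fin m) : Prop :=
  ∃ i j : Fin n, f (Sum.inl i) = Sum.inl j

/-- `f` has a cap: two bottom-row elements are paired with each other. -/
def HasCap {n m : ℕ} (f : Fin n ⊕ Fin m → Fin n ⊕ Fin m) : Prop :=
  ∃ i j : Fin m, f (Sum.inr i) = Sum.inr j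

/-- `F : n → m` is monic in the diagram category `D`: left-cancellable with
respect to all morphisms of `D` (pairs of a loop count and a planar
involution). -/
def Monic {n m : ℕ} (F : TLHom n m) : Prop :=
  ∀ (p : ℕ) (G H : TLHom p n), Planar G.2 → Planar H.2 →
    TLcomp G F = TLcomp H F → G = H

/-- `F : n → m` is epic in the diagram category `D`: right-cancellable with
respect to all morphisms of `D`. -/
def Epic {n m : ℕ} (F : TLHom n m) : Prop :=
  ∀ (p : ℕ) (G H : TLHom m p), Planar G.2 → Planar H.2 →
    TLcomp F G = TLcomp F H → G = H


section TLAux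

open Sum Relation

lemma comp_iff' {α β γ : Type*} (r : α → β → Prop) (s : β → γ → Prop) (a : α) (c : γ) :
    Relation.Comp r s a c ↔ ∃ b, r a b ∧ s b c := Iff.rfl

lemma rtg_eq_of_sub {α : Type*} {r : α → α → Prop} (h : ∀ a b, r a b → a = b)
    {a b : α} (hab : Relation.ReflTransGen r a b) : a = b := by
  induction hab with
  | refl => rfl
  | tail _ h2 ih => exact ih.trans (h _ _ h2)

section Quad
variable {A B C : Type*} (R : A ⊕ B → A ⊕ B → Prop) (S : B ⊕ C → B ⊕ C → Prop)

lemma execR_ll (i j : A) : ExecR R S (Sum.inl i) (Sum.inl j) ↔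
    (R (inl i) (inl j) ∨
      Relation.Comp (fun a b => R (inl a) (inr b))
        (Relation.Comp (fun a b => S (inl a) (inl b))
          (Relation.Comp
            (Relation.ReflTransGen
              (Relation.Comp (fun a b => R (inr a) (inr b)) (fun a b => S (inl a) (inl b))))
            (fun a b => R (inr a) (inl b)))) i j) := Iff.rfl

lemma execR_lr (i : A) (c : C) : ExecR R S (Sum.inl i) (Sum.inr c) ↔
    Relation.Comp (fun a b => R (inl a) (inr b))
      (Relation.Comp
        (Relation.ReflTransGen
          (Relation.Comp (fun a b => S (inl a) (inl b)) (fun a b => R (inr a) (inr b))))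
        (fun a b => S (inl a) (inr b))) i c := Iff.rfl

lemma execR_rl (c : C) (j : A) : ExecR R S (Sum.inr c) (Sum.inl j) ↔
    Relation.Comp (fun a b => S (inr a) (inl b))
      (Relation.Comp
        (Relation.ReflTransGen
          (Relation.Comp (fun a b => R (inr a) (inr b)) (fun a b => S (inl a) (inl b))))
        (fun a b => R (inr a) (inl b))) c j := Iff.rfl

lemma execR_rr (c c' : C) : ExecR R S (Sum.inr c) (Sum.inr c') ↔
    (S (inr c) (inr c') ∨
      Relation.Comp (fun a b => S (inr a) (inl b))
        (Relation.Comp (fun a b => R (inr a) (inr b))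
          (Relation.Comp
            (Relation.ReflTransGen
              (Relation.Comp (fun a b => S (inl a) (inl b)) (fun a b => R (inr a) (inr b))))
            (fun a b => S (inl a) (inr b)))) c c') := Iff.rfl

end Quad

lemma execFun_eq {n m p : ℕ} {g : Fin p ⊕ Fin n → Fin p ⊕ Fin n}
    {f : Fin n ⊕ Fin m → Fin n ⊕ Fin m} {φ : Fin p ⊕ Fin m → Fin p ⊕ Fin m}
    (h : ∀ x y, ExecR (graphRel g) (graphRel f) x y ↔ y = φ x) :
    execFun g f = φ := by
  funext x
  have hx : ∃ y, ExecR (graphRel g) (graphRel f) x y := ⟨φ x, (h x _).mpr rfl⟩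
  unfold execFun
  rw [dif_pos hx]
  exact (h x _).mp hx.choose_spec

/-- Explicit description of the execution composite when `f` has no cups. -/
def Phi {n m p : ℕ} (g : Fin p ⊕ Fin n → Fin p ⊕ Fin n)
    (f : Fin n ⊕ Fin m → Fin n ⊕ Fin m) : Fin p ⊕ Fin m → Fin p ⊕ Fin m
  | .inl i => match g (.inl i) with
    | .inl j => .inl j
    | .inr b => match f (.inl b) with
      | .inl _ => .inl i
      | .inr c => .inr c
  | .inr c => match f (.inr c) with
    | .inr c' => .inr c'
    | .inl b => match g (.inr b) with
      | .inl a => .inl a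
      | .inr b' => match f (.inl b') with
        | .inl _ => .inr c
        | .inr c' => .inr c'

variable {n m p : ℕ} {g : Fin p ⊕ Fin n → Fin p ⊕ Fin n}
  {f : Fin n ⊕ Fin m → Fin n ⊕ Fin m}

lemma Phi_ll {i : Fin p} {j : Fin p} (hg : g (Sum.inl i) = Sum.inl j) :
    Phi g f (Sum.inl i) = Sum.inl j := by
  simp only [Phi]; rw [hg]

lemma Phi_lr {i : Fin p} {b : Fin n} {c : Fin m} (hg : g (Sum.inl i) = Sum.inr b)
    (hf : f (Sum.inl b) = Sum.inr c) : Phi g f (Sum.inl i) = Sum.inr c := by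
  simp only [Phi]; rw [hg]; dsimp only; rw [hf]

lemma Phi_rr0 {c c' : Fin m} (hf : f (Sum.inr c) = Sum.inr c') :
    Phi g f (Sum.inr c) = Sum.inr c' := by
  simp only [Phi]; rw [hf]

lemma Phi_rl {c : Fin m} {b : Fin n} {a : Fin p} (hf : f (Sum.inr c) = Sum.inl b)
    (hg : g (Sum.inr b) = Sum.inl a) : Phi g f (Sum.inr c) = Sum.inl a := by
  simp only [Phi]; rw [hf]; dsimp only; rw [hg]

lemma Phi_rr1 {c c' : Fin m} {b b' : Fin n} (hf : f (Sum.inr c) = Sum.inl b)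
    (hg : g (Sum.inr b) = Sum.inr b') (hf2 : f (Sum.inl b') = Sum.inr c') :
    Phi g f (Sum.inr c) = Sum.inr c' := by
  simp only [Phi]; rw [hf]; dsimp only; rw [hg]; dsimp only; rw [hf2]

lemma execR_nocup (g : Fin p ⊕ Fin n → Fin p ⊕ Fin n)
    (f : Fin n ⊕ Fin m → Fin n ⊕ Fin m)
    (hnc : ∀ b j, f (Sum.inl b) ≠ Sum.inl j) :
    ∀ x y, ExecR (graphRel g) (graphRel f) x y ↔ y = Phi g f x := by
  have hSbb : ∀ b b' : Fin n, ¬ graphRel f (Sum.inl b) (Sum.inl b') := fun b b' h => hnc b b' h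
  have hRS : ∀ a b : Fin n,
      Relation.Comp (fun a b : Fin n => graphRel g (Sum.inr a) (Sum.inr b))
        (fun a b : Fin n => graphRel f (Sum.inl a) (Sum.inl b)) a b → a = b := by
    intro a b h
    obtain ⟨c, _, h2⟩ := (comp_iff' _ _ _ _).1 h
    exact absurd h2 (hSbb _ _)
  have hSR : ∀ a b : Fin n,
      Relation.Comp (fun a b : Fin n => graphRel f (Sum.inl a) (Sum.inl b))
        (fun a b : Fin n => graphRel g (Sum.inr a) (Sum.inr b)) a b → a = b := by
    intro a b h
    obtain ⟨c, h1, _⟩ := (comp_iff' _ _ _ _).1 h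
    exact absurd h1 (hSbb _ _)
  rintro (i | c) (j | c')
  · -- inl i, inl j
    rw [execR_ll, comp_iff']
    constructor
    · rintro (h | ⟨b, hb, hrest⟩)
      · rw [Phi_ll h]
      · obtain ⟨b', hb', _⟩ := (comp_iff' _ _ _ _).1 hrest
        exact absurd hb' (hSbb _ _)
    · intro hy
      rcases hg : g (Sum.inl i) with j' | b
      · rw [Phi_ll hg] at hy
        obtain rfl : j = j' := by injection hy
        exact Or.inl hg
      · rcases hf2 : f (Sum.inl b) with j0 | c
        · exact absurd hf2 (hnc _ _)
        · rw [Phi_lr hg hf2] at hy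
          exact absurd hy (by simp)
  · -- inl i, inr c'
    rw [execR_lr, comp_iff']
    constructor
    · rintro ⟨b, hb, hrest⟩
      obtain ⟨b', hchain, hc'⟩ := (comp_iff' _ _ _ _).1 hrest
      have hbb : b = b' := rtg_eq_of_sub hSR hchain
      subst hbb
      rw [Phi_lr hb hc']
    · intro hy
      rcases hg : g (Sum.inl i) with j' | b
      · rw [Phi_ll hg] at hy
        exact absurd hy (by simp)
      · rcases hf2 : f (Sum.inl b) with j0 | c
        · exact absurd hf2 (hnc _ _)
        · rw [Phi_lr hg hf2] at hy
          obtain rfl : c' = c := by injection hy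
          exact ⟨b, hg, (comp_iff' _ _ _ _).2 ⟨b, Relation.ReflTransGen.refl, hf2⟩⟩
  · -- inr c, inl j
    rw [execR_rl, comp_iff']
    constructor
    · rintro ⟨b, hb, hrest⟩
      obtain ⟨b', hchain, hj⟩ := (comp_iff' _ _ _ _).1 hrest
      have hbb : b = b' := rtg_eq_of_sub hRS hchain
      subst hbb
      rw [Phi_rl hb hj]
    · intro hy
      rcases hf2 : f (Sum.inr c) with b | c0
      · rcases hg : g (Sum.inr b) with a | b'
        · rw [Phi_rl hf2 hg] at hy
          obtain rfl : j = a := by injection hy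
          exact ⟨b, hf2, (comp_iff' _ _ _ _).2 ⟨b, Relation.ReflTransGen.refl, hg⟩⟩
        · rcases hf3 : f (Sum.inl b') with j0 | c2
          · exact absurd hf3 (hnc _ _)
          · rw [Phi_rr1 hf2 hg hf3] at hy
            exact absurd hy (by simp)
      · rw [Phi_rr0 hf2] at hy
        exact absurd hy (by simp)
  · -- inr c, inr c'
    rw [execR_rr, comp_iff']
    constructor
    · rintro (h | ⟨b, hb, hrest⟩)
      · rw [Phi_rr0 h]
      · obtain ⟨b', hb', hrest2⟩ := (comp_iff' _ _ _ _).1 hrest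
        obtain ⟨b'', hchain, hc'⟩ := (comp_iff' _ _ _ _).1 hrest2
        have hbb : b' = b'' := rtg_eq_of_sub hSR hchain
        subst hbb
        rw [Phi_rr1 hb hb' hc']
    · intro hy
      rcases hf2 : f (Sum.inr c) with b | c0
      · rcases hg : g (Sum.inr b) with a | b'
        · rw [Phi_rl hf2 hg] at hy
          exact absurd hy (by simp)
        · rcases hf3 : f (Sum.inl b') with j0 | c2
          · exact absurd hf3 (hnc _ _)
          · rw [Phi_rr1 hf2 hg hf3] at hy
            obtain rfl : c' = c2 := by injection hy
            exact Or.inr ⟨b, hf2, (comp_iff' _ _ _ _).2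
              ⟨b', hg, (comp_iff' _ _ _ _).2 ⟨b', Relation.ReflTransGen.refl, hf3⟩⟩⟩
      · rw [Phi_rr0 hf2] at hy
        obtain rfl : c' = c0 := by injection hy
        exact Or.inl hf2

lemma Z_eq_zero (h : ∀ i j, ¬ Cyc g f i j) : Z g f = 0 := by
  have hset : {S : Set (Fin n) | ∃ i, Cyclic (Cyc g f) i ∧ S = cycleOf (Cyc g f) i} = ∅ := by
    ext S
    simp only [Set.mem_setOf_eq, Set.mem_empty_iff_false, iff_false, not_exists]
    rintro i ⟨⟨k, hk, hpow⟩, _⟩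
    match k, hk with
    | k + 1, _ =>
      obtain ⟨c, hc, _⟩ := (comp_iff' _ _ _ _).1 hpow
      exact h i c hc
  rw [Z, hset, Set.ncard_empty]

lemma Phi_inj (hfinj : Function.Injective f) (hfinv : Function.Involutive f)
    (hnc : ∀ b j, f (Sum.inl b) ≠ Sum.inl j)
    (g h : Fin p ⊕ Fin n → Fin p ⊕ Fin n) (heq : Phi g f = Phi h f) : g = h := by
  funext x
  match x with
  | Sum.inl i =>
    have hthis := congrFun heq (Sum.inl i)
    rcases hg : g (Sum.inl i) with j | b <;> rcases hh : h (Sum.inl i) with j' | b'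
    · rw [Phi_ll hg, Phi_ll hh] at hthis
      obtain rfl : j = j' := by injection hthis
      rfl
    · rcases hfb : f (Sum.inl b') with j0 | c
      · exact absurd hfb (hnc _ _)
      · rw [Phi_ll hg, Phi_lr hh hfb] at hthis
        exact absurd hthis (by simp)
    · rcases hfb : f (Sum.inl b) with j0 | c
      · exact absurd hfb (hnc _ _)
      · rw [Phi_ll hh, Phi_lr hg hfb] at hthis
        exact absurd hthis (by simp)
    · rcases hfb : f (Sum.inl b) with j0 | c
      · exact absurd hfb (hnc _ _)
      rcases hfb' : f (Sum.inl b') with j0 | c'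
      · exact absurd hfb' (hnc _ _)
      rw [Phi_lr hg hfb, Phi_lr hh hfb'] at hthis
      obtain rfl : c = c' := by injection hthis
      obtain rfl : b = b' := by
        have := hfinj (hfb.trans hfb'.symm)
        injection this
      rfl
  | Sum.inr b =>
    rcases hfb : f (Sum.inl b) with j0 | c
    · exact absurd hfb (hnc _ _)
    have hfc : f (Sum.inr c) = Sum.inl b := by rw [← hfb]; exact hfinv _
    have hthis := congrFun heq (Sum.inr c)
    rcases hg : g (Sum.inr b) with a | b1 <;> rcases hh : h (Sum.inr b) with a' | b2
    · rw [Phi_rl hfc hg, Phi_rl hfc hh] at hthis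
      obtain rfl : a = a' := by injection hthis
      rfl
    · rcases hfb2 : f (Sum.inl b2) with j0 | c2
      · exact absurd hfb2 (hnc _ _)
      · rw [Phi_rl hfc hg, Phi_rr1 hfc hh hfb2] at hthis
        exact absurd hthis (by simp)
    · rcases hfb1 : f (Sum.inl b1) with j0 | c1
      · exact absurd hfb1 (hnc _ _)
      · rw [Phi_rl hfc hh, Phi_rr1 hfc hg hfb1] at hthis
        exact absurd hthis (by simp)
    · rcases hfb1 : f (Sum.inl b1) with j0 | c1
      · exact absurd hfb1 (hnc _ _)
      rcases hfb2 : f (Sum.inl b2) with j0 | c2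
      · exact absurd hfb2 (hnc _ _)
      rw [Phi_rr1 hfc hg hfb1, Phi_rr1 hfc hh hfb2] at hthis
      obtain rfl : c1 = c2 := by injection hthis
      obtain rfl : b1 = b2 := by
        have := hfinj (hfb1.trans hfb2.symm)
        injection this
      rfl

/-- The execution composite with the identity (twist) on the left is `f`. -/
lemma execR_swap {n m : ℕ} (f : Fin n ⊕ Fin m → Fin n ⊕ Fin m) :
    ∀ x y, ExecR (graphRel (Sum.swap : Fin n ⊕ Fin n → Fin n ⊕ Fin n)) (graphRel f) x y ↔
      y = f x := by
  have hRbb : ∀ b b' : Fin n,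
      ¬ graphRel (Sum.swap : Fin n ⊕ Fin n → Fin n ⊕ Fin n) (Sum.inr b) (Sum.inr b') := by
    intro b b' h
    exact absurd h (by simp [graphRel])
  have hRS : ∀ a b : Fin n,
      Relation.Comp (fun a b : Fin n => graphRel (Sum.swap : Fin n ⊕ Fin n → Fin n ⊕ Fin n)
          (Sum.inr a) (Sum.inr b))
        (fun a b : Fin n => graphRel f (Sum.inl a) (Sum.inl b)) a b → a = b := by
    intro a b h
    obtain ⟨c, h1, _⟩ := (comp_iff' _ _ _ _).1 h
    exact absurd h1 (hRbb _ _)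
  have hSR : ∀ a b : Fin n,
      Relation.Comp (fun a b : Fin n => graphRel f (Sum.inl a) (Sum.inl b))
        (fun a b : Fin n => graphRel (Sum.swap : Fin n ⊕ Fin n → Fin n ⊕ Fin n)
          (Sum.inr a) (Sum.inr b)) a b → a = b := by
    intro a b h
    obtain ⟨c, _, h2⟩ := (comp_iff' _ _ _ _).1 h
    exact absurd h2 (hRbb _ _)
  rintro (i | c) (j | c')
  · rw [execR_ll, comp_iff']
    constructor
    · rintro (h | ⟨b, hb, hrest⟩)
      · exact absurd h (by simp [graphRel])
      · have hb0 : Sum.inr i = (Sum.inr b : Fin n ⊕ Fin n) := hb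
        injection hb0 with hb0
        subst hb0
        obtain ⟨b', hb', hrest2⟩ := (comp_iff' _ _ _ _).1 hrest
        obtain ⟨b'', hchain, hj⟩ := (comp_iff' _ _ _ _).1 hrest2
        have : b' = b'' := rtg_eq_of_sub hRS hchain
        subst this
        have hj0 : Sum.inl b' = (Sum.inl j : Fin n ⊕ Fin n) := hj
        injection hj0 with hj0
        subst hj0
        exact hb'.symm
    · intro hy
      refine Or.inr ⟨i, rfl, (comp_iff' _ _ _ _).2 ⟨j, ?_, (comp_iff' _ _ _ _).2
        ⟨j, Relation.ReflTransGen.refl, rfl⟩⟩⟩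
      exact hy.symm
  · rw [execR_lr, comp_iff']
    constructor
    · rintro ⟨b, hb, hrest⟩
      have hb0 : Sum.inr i = (Sum.inr b : Fin n ⊕ Fin n) := hb
      injection hb0 with hb0
      subst hb0
      obtain ⟨b', hchain, hc'⟩ := (comp_iff' _ _ _ _).1 hrest
      have : i = b' := rtg_eq_of_sub hSR hchain
      subst this
      exact hc'.symm
    · intro hy
      exact ⟨i, rfl, (comp_iff' _ _ _ _).2 ⟨i, Relation.ReflTransGen.refl, hy.symm⟩⟩
  · rw [execR_rl, comp_iff']
    constructor
    · rintro ⟨b, hb, hrest⟩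
      obtain ⟨b', hchain, hj⟩ := (comp_iff' _ _ _ _).1 hrest
      have : b = b' := rtg_eq_of_sub hRS hchain
      subst this
      have hj0 : Sum.inl b = (Sum.inl j : Fin n ⊕ Fin n) := hj
      injection hj0 with hj0
      subst hj0
      exact hb.symm
    · intro hy
      exact ⟨j, hy.symm, (comp_iff' _ _ _ _).2 ⟨j, Relation.ReflTransGen.refl, rfl⟩⟩
  · rw [execR_rr, comp_iff']
    constructor
    · rintro (h | ⟨b, hb, hrest⟩)
      · exact h.symm
      · obtain ⟨b', hb', _⟩ := (comp_iff' _ _ _ _).1 hrest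
        exact absurd hb' (hRbb _ _)
    · intro hy
      exact Or.inl hy.symm

lemma Z_swap {n m : ℕ} (f : Fin n ⊕ Fin m → Fin n ⊕ Fin m) :
    Z (Sum.swap : Fin n ⊕ Fin n → Fin n ⊕ Fin n) f = 0 := by
  apply Z_eq_zero
  intro i j h
  obtain ⟨c, h1, _⟩ := (comp_iff' _ _ _ _).1 h
  exact absurd h1 (by simp)

lemma swap_planar {n : ℕ} : Planar (Sum.swap : Fin n ⊕ Fin n → Fin n ⊕ Fin n) := by
  refine ⟨⟨Sum.swap_swap, ?_⟩, ?_, ?_⟩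
  · rintro (a | a) <;> simp
  · rintro (a | a) (b | b) hab hfb <;> simp_all
  · rintro (a | a) (b | b) _ hab hb <;> simp_all [Incomp]

/-- The Temperley-Lieb generator diagram: cup and cap joining positions `k`, `k'`. -/
def cupcap {n : ℕ} (k k' : Fin n) : Fin n ⊕ Fin n → Fin n ⊕ Fin n
  | .inl i => if i = k then .inl k' else if i = k' then .inl k else .inr i
  | .inr i => if i = k then .inr k' else if i = k' then .inr k else .inl i

lemma cupcap_inl {n : ℕ} (k k' : Fin n) (i : Fin n) :
    cupcap k k' (Sum.inl i) =
      if i = k then Sum.inl k' else if i = k' then Sum.inl k else Sum.inr i := rfl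

lemma cupcap_inr {n : ℕ} (k k' : Fin n) (i : Fin n) :
    cupcap k k' (Sum.inr i) =
      if i = k then Sum.inr k' else if i = k' then Sum.inr k else Sum.inl i := rfl

lemma cupcap_planar {n : ℕ} (k : Fin n) (hk : (k : ℕ) + 1 < n) :
    Planar (cupcap k ⟨(k : ℕ) + 1, hk⟩) := by
  set k' : Fin n := ⟨(k : ℕ) + 1, hk⟩ with hk'
  have hkval : (k' : ℕ) = (k : ℕ) + 1 := rfl
  have hne : k ≠ k' := by
    intro h
    have : (k : ℕ) = (k' : ℕ) := by rw [h]
    omega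
  have hne' : k' ≠ k := hne.symm
  refine ⟨⟨?_, ?_⟩, ?_, ?_⟩
  · -- involutive
    rintro (i | i) <;> by_cases h1 : i = k <;> by_cases h2 : i = k' <;>
      simp_all [cupcap_inl, cupcap_inr]
  · -- fixed point free
    rintro (i | i) <;> by_cases h1 : i = k <;> by_cases h2 : i = k' <;>
      simp_all [cupcap_inl, cupcap_inr]
  · -- PL1
    rintro (a | a) (b | b) hab hfb
    · exfalso
      rw [Sum.inl_lt_inl_iff] at hab
      rw [cupcap_inl] at hfb
      split_ifs at hfb with h1 h2
      · subst h1
        rw [Sum.inl_lt_inl_iff, Fin.lt_def] at hfb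
        rw [Fin.lt_def] at hab
        omega
      · subst h2
        rw [Sum.inl_lt_inl_iff, Fin.lt_def] at hfb
        rw [Fin.lt_def] at hab
        omega
      · exact absurd hfb (by simp)
    · exact absurd hab (by simp)
    · exact absurd hab (by simp)
    · exfalso
      rw [Sum.inr_lt_inr_iff] at hab
      rw [cupcap_inr] at hfb
      split_ifs at hfb with h1 h2
      · subst h1
        rw [Sum.inr_lt_inr_iff, Fin.lt_def] at hfb
        rw [Fin.lt_def] at hab
        omega
      · subst h2
        rw [Sum.inr_lt_inr_iff, Fin.lt_def] at hfb
        rw [Fin.lt_def] at hab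
        omega
      · exact absurd hfb (by simp)
  · -- PL2
    have hkk' : k ≤ k' := by rw [Fin.le_def]; omega
    rintro (a | a) (b | b) h1 hab h3
    · -- inl, inl
      rw [Sum.inl_lt_inl_iff] at hab
      by_cases ha1 : a = k
      · exfalso; subst ha1
        rw [cupcap_inl, if_pos rfl] at h1
        exact h1.2 (by simpa using hkk')
      by_cases ha2 : a = k'
      · exfalso; subst ha2
        rw [cupcap_inl, if_neg hne', if_pos rfl] at h1
        exact h1.1 (by simpa using hkk')
      by_cases hb1 : b = k
      · exfalso; subst hb1
        rw [cupcap_inl, if_pos rfl] at h3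
        exact h3.1 (by simpa using hkk')
      by_cases hb2 : b = k'
      · exfalso; subst hb2
        rw [cupcap_inl, if_neg hne', if_pos rfl] at h3
        exact h3.2 (by simpa using hkk')
      rw [cupcap_inl, if_neg ha1, if_neg ha2, cupcap_inl, if_neg hb1, if_neg hb2]
      simpa using hab
    · exact absurd hab (by simp)
    · exact absurd hab (by simp)
    · -- inr, inr
      rw [Sum.inr_lt_inr_iff] at hab
      by_cases ha1 : a = k
      · exfalso; subst ha1
        rw [cupcap_inr, if_pos rfl] at h1
        exact h1.2 (by simpa using hkk')
      by_cases ha2 : a = k'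
      · exfalso; subst ha2
        rw [cupcap_inr, if_neg hne', if_pos rfl] at h1
        exact h1.1 (by simpa using hkk')
      by_cases hb1 : b = k
      · exfalso; subst hb1
        rw [cupcap_inr, if_pos rfl] at h3
        exact h3.1 (by simpa using hkk')
      by_cases hb2 : b = k'
      · exfalso; subst hb2
        rw [cupcap_inr, if_neg hne', if_pos rfl] at h3
        exact h3.2 (by simpa using hkk')
      rw [cupcap_inr, if_neg ha1, if_neg ha2, cupcap_inr, if_neg hb1, if_neg hb2]
      simpa using hab

lemma execR_cupcap {n m : ℕ} {f : Fin n ⊕ Fin m → Fin n ⊕ Fin m}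
    (hfinv : Function.Involutive f) {k k' : Fin n} (hne : k ≠ k')
    (hcup : f (Sum.inl k) = Sum.inl k') :
    ∀ x y, ExecR (graphRel (cupcap k k')) (graphRel f) x y ↔ y = f x := by
  have hfinj : Function.Injective f := hfinv.injective
  have hcup' : f (Sum.inl k') = Sum.inl k := by
    have := hfinv (Sum.inl k)
    rw [hcup] at this
    exact this
  have hto_k : ∀ b, f (Sum.inl b) = Sum.inl k → b = k' := by
    intro b h
    have := hfinj (h.trans hcup'.symm)
    injection this
  have hto_k' : ∀ b, f (Sum.inl b) = Sum.inl k' → b = k := by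
    intro b h
    have := hfinj (h.trans hcup.symm)
    injection this
  have hnc_k : ∀ c : Fin m, f (Sum.inr c) ≠ Sum.inl k := by
    intro c h
    have h2 := hfinv (Sum.inr c)
    rw [h, hcup] at h2
    exact absurd h2 (by simp)
  have hnc_k' : ∀ c : Fin m, f (Sum.inr c) ≠ Sum.inl k' := by
    intro c h
    have h2 := hfinv (Sum.inr c)
    rw [h, hcup'] at h2
    exact absurd h2 (by simp)
  have hRaa : ∀ i j, cupcap k k' (Sum.inl i) = Sum.inl j →
      (i = k ∧ j = k') ∨ (i = k' ∧ j = k) := by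
    intro i j h
    rw [cupcap_inl] at h
    split_ifs at h with h1 h2
    · exact Or.inl ⟨h1, by injection h with h; exact h.symm⟩
    · exact Or.inr ⟨h2, by injection h with h; exact h.symm⟩
  have hRbb : ∀ b b', cupcap k k' (Sum.inr b) = Sum.inr b' →
      (b = k ∧ b' = k') ∨ (b = k' ∧ b' = k) := by
    intro b b' h
    rw [cupcap_inr] at h
    split_ifs at h with h1 h2
    · exact Or.inl ⟨h1, by injection h with h; exact h.symm⟩
    · exact Or.inr ⟨h2, by injection h with h; exact h.symm⟩
  have hRab : ∀ i b, cupcap k k' (Sum.inl i) = Sum.inr b → i ≠ k ∧ i ≠ k' ∧ b = i := by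
    intro i b h
    rw [cupcap_inl] at h
    split_ifs at h with h1 h2
    exact ⟨h1, h2, by injection h with h; exact h.symm⟩
  have hRba : ∀ b a, cupcap k k' (Sum.inr b) = Sum.inl a → b ≠ k ∧ b ≠ k' ∧ a = b := by
    intro b a h
    rw [cupcap_inr] at h
    split_ifs at h with h1 h2
    exact ⟨h1, h2, by injection h with h; exact h.symm⟩
  have hstepRS : ∀ a b : Fin n,
      Relation.Comp (fun a b : Fin n => graphRel (cupcap k k') (Sum.inr a) (Sum.inr b))
        (fun a b : Fin n => graphRel f (Sum.inl a) (Sum.inl b)) a b → a = b := by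
    intro a b h
    obtain ⟨c, h1, h2⟩ := (comp_iff' _ _ _ _).1 h
    have h2' : f (Sum.inl c) = Sum.inl b := h2
    rcases hRbb a c h1 with ⟨ha, hc⟩ | ⟨ha, hc⟩
    · rw [hc, hcup'] at h2'
      injection h2' with h2'
      exact ha.trans h2'
    · rw [hc, hcup] at h2'
      injection h2' with h2'
      exact ha.trans h2'
  have hstepSR : ∀ a b : Fin n,
      Relation.Comp (fun a b : Fin n => graphRel f (Sum.inl a) (Sum.inl b))
        (fun a b : Fin n => graphRel (cupcap k k') (Sum.inr a) (Sum.inr b)) a b → a = b := by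
    intro a b h
    obtain ⟨c, h1, h2⟩ := (comp_iff' _ _ _ _).1 h
    have h1' : f (Sum.inl a) = Sum.inl c := h1
    rcases hRbb c b h2 with ⟨hc, hb⟩ | ⟨hc, hb⟩
    · rw [hc] at h1'
      exact (hto_k a h1').trans hb.symm
    · rw [hc] at h1'
      exact (hto_k' a h1').trans hb.symm
  rintro (i | c) (j | c')
  · rw [execR_ll, comp_iff']
    constructor
    · rintro (h | ⟨b, hb, hrest⟩)
      · rcases hRaa i j h with ⟨rfl, rfl⟩ | ⟨rfl, rfl⟩
        · exact hcup.symm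
        · exact hcup'.symm
      · obtain ⟨hi1, hi2, hbi⟩ := hRab i b hb
        obtain ⟨b', hb', hrest2⟩ := (comp_iff' _ _ _ _).1 hrest
        obtain ⟨b'', hchain, hj⟩ := (comp_iff' _ _ _ _).1 hrest2
        have he : b' = b'' := rtg_eq_of_sub hstepRS hchain
        obtain ⟨_, _, hjb⟩ := hRba b'' j hj
        have hb2 : f (Sum.inl b) = Sum.inl b' := hb'
        rw [hbi, he] at hb2
        rw [hjb]
        exact hb2.symm
    · intro hy
      by_cases hik : i = k
      · subst hik
        rw [hcup] at hy
        injection hy with hy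
        subst hy
        refine Or.inl ?_
        show cupcap _ _ _ = _
        rw [cupcap_inl, if_pos rfl]
      by_cases hik' : i = k'
      · subst hik'
        rw [hcup'] at hy
        injection hy with hy
        subst hy
        refine Or.inl ?_
        show cupcap _ _ _ = _
        rw [cupcap_inl, if_neg hne.symm, if_pos rfl]
      · have hfij : f (Sum.inl i) = Sum.inl j := hy.symm
        have hjk : j ≠ k := fun h => hik' (hto_k i (h ▸ hfij))
        have hjk' : j ≠ k' := fun h => hik (hto_k' i (h ▸ hfij))
        refine Or.inr ⟨i, ?_, (comp_iff' _ _ _ _).2 ⟨j, hfij,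
          (comp_iff' _ _ _ _).2 ⟨j, Relation.ReflTransGen.refl, ?_⟩⟩⟩
        · show cupcap k k' (Sum.inl i) = Sum.inr i
          rw [cupcap_inl, if_neg hik, if_neg hik']
        · show cupcap k k' (Sum.inr j) = Sum.inl j
          rw [cupcap_inr, if_neg hjk, if_neg hjk']
  · rw [execR_lr, comp_iff']
    constructor
    · rintro ⟨b, hb, hrest⟩
      obtain ⟨hi1, hi2, hbi⟩ := hRab i b hb
      obtain ⟨b', hchain, hc⟩ := (comp_iff' _ _ _ _).1 hrest
      have he : b = b' := rtg_eq_of_sub hstepSR hchain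
      have hc2 : f (Sum.inl b') = Sum.inr c' := hc
      rw [← he, hbi] at hc2
      exact hc2.symm
    · intro hy
      have hfi : f (Sum.inl i) = Sum.inr c' := hy.symm
      have hik : i ≠ k := by
        intro h
        rw [h, hcup] at hfi
        exact absurd hfi (by simp)
      have hik' : i ≠ k' := by
        intro h
        rw [h, hcup'] at hfi
        exact absurd hfi (by simp)
      refine ⟨i, ?_, (comp_iff' _ _ _ _).2 ⟨i, Relation.ReflTransGen.refl, hfi⟩⟩
      show cupcap k k' (Sum.inl i) = Sum.inr i
      rw [cupcap_inl, if_neg hik, if_neg hik']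
  · rw [execR_rl, comp_iff']
    constructor
    · rintro ⟨b, hb, hrest⟩
      obtain ⟨b', hchain, hj⟩ := (comp_iff' _ _ _ _).1 hrest
      have he : b = b' := rtg_eq_of_sub hstepRS hchain
      obtain ⟨_, _, hjb⟩ := hRba b' j hj
      have hb2 : f (Sum.inr c) = Sum.inl b := hb
      rw [hjb, ← he]
      exact hb2.symm
    · intro hy
      have hfc : f (Sum.inr c) = Sum.inl j := hy.symm
      have hjk : j ≠ k := fun h => hnc_k c (h ▸ hfc)
      have hjk' : j ≠ k' := fun h => hnc_k' c (h ▸ hfc)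
      refine ⟨j, hfc, (comp_iff' _ _ _ _).2 ⟨j, Relation.ReflTransGen.refl, ?_⟩⟩
      show cupcap k k' (Sum.inr j) = Sum.inl j
      rw [cupcap_inr, if_neg hjk, if_neg hjk']
  · rw [execR_rr, comp_iff']
    constructor
    · rintro (h | ⟨b, hb, hrest⟩)
      · exact h.symm
      · obtain ⟨b', hb', _⟩ := (comp_iff' _ _ _ _).1 hrest
        rcases hRbb b b' hb' with ⟨rfl, _⟩ | ⟨rfl, _⟩
        · exact absurd hb (hnc_k c)
        · exact absurd hb (hnc_k' c)
    · intro hy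
      exact Or.inl hy.symm

lemma exists_adj_cup {n m : ℕ} {f : Fin n ⊕ Fin m → Fin n ⊕ Fin m}
    (hf : Planar f) (hc : HasCup f) :
    ∃ (k : Fin n) (hk : (k : ℕ) + 1 < n), f (Sum.inl k) = Sum.inl ⟨(k : ℕ) + 1, hk⟩ := by
  have aux : ∀ d (i j : Fin n), ((j : ℕ) - (i : ℕ)) = d → f (Sum.inl i) = Sum.inl j →
      (i : ℕ) < (j : ℕ) →
      ∃ (k : Fin n) (hk : (k : ℕ) + 1 < n), f (Sum.inl k) = Sum.inl ⟨(k : ℕ) + 1, hk⟩ := by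
    intro d
    induction d using Nat.strong_induction_on with
    | _ d ih =>
      intro i j hd hij hlt
      by_cases hadj : (i : ℕ) + 1 = (j : ℕ)
      · refine ⟨i, by omega, ?_⟩
        rw [hij]
        congr 1
        exact Fin.ext (show (j : ℕ) = (i : ℕ) + 1 by omega)
      · have h1 : (i : ℕ) + 1 < (j : ℕ) := by omega
        have hkn : (i : ℕ) + 1 < n := lt_trans h1 j.isLt
        have hik : (Sum.inl i : Fin n ⊕ Fin m) < Sum.inl (⟨(i : ℕ) + 1, hkn⟩ : Fin n) := by
          rw [Sum.inl_lt_inl_iff, Fin.lt_def]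
          exact Nat.lt_succ_self _
        have hkj : (Sum.inl (⟨(i : ℕ) + 1, hkn⟩ : Fin n) : Fin n ⊕ Fin m) < f (Sum.inl i) := by
          rw [hij, Sum.inl_lt_inl_iff, Fin.lt_def]
          exact h1
        obtain ⟨hl1, hl2⟩ := hf.2.1 _ _ hik hkj
        rcases hfk : f (Sum.inl (⟨(i : ℕ) + 1, hkn⟩ : Fin n)) with l | c
        · rw [hfk] at hl1 hl2
          rw [hij] at hl2
          rw [Sum.inl_lt_inl_iff, Fin.lt_def] at hl1 hl2
          have hlkk : l ≠ (⟨(i : ℕ) + 1, hkn⟩ : Fin n) := by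
            intro h
            exact hf.1.2 (Sum.inl (⟨(i : ℕ) + 1, hkn⟩ : Fin n)) (by rw [hfk, h])
          have hlval : (l : ℕ) ≠ (i : ℕ) + 1 := by
            intro h
            exact hlkk (Fin.ext h)
          have hgt : (i : ℕ) + 1 < (l : ℕ) := by
            have : (i : ℕ) < (l : ℕ) := hl1
            omega
          exact ih ((l : ℕ) - ((i : ℕ) + 1)) (by omega) (⟨(i : ℕ) + 1, hkn⟩ : Fin n) l
            rfl hfk hgt
        · rw [hfk] at hl1
          exact absurd hl1 (by simp)
  obtain ⟨i, j, hij⟩ := hc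
  have hne : (i : ℕ) ≠ (j : ℕ) := by
    intro h
    exact hf.1.2 (Sum.inl i) (by rw [hij]; exact congrArg _ (Fin.ext h.symm))
  rcases Nat.lt_or_ge (i : ℕ) (j : ℕ) with hlt | hge
  · exact aux _ i j rfl hij hlt
  · have hlt : (j : ℕ) < (i : ℕ) := by omega
    have hji : f (Sum.inl j) = Sum.inl i := by
      have := hf.1.1 (Sum.inl i)
      rw [hij] at this
      exact this
    exact aux _ j i rfl hji hlt

end TLAux

/-- A morphism `f : n → m` of the Temperley-Lieb diagram category `D` is monic
iff it has no cups. -/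
theorem stmt_13 (n m : ℕ) (F : TLHom n m) (hF : Planar F.2) :
    Monic F ↔ ¬ HasCup F.2 := by
  constructor
  · -- Monic → no cups
    intro hm hc
    obtain ⟨k, hk, hcup⟩ := exists_adj_cup hF hc
    have hne : k ≠ (⟨(k : ℕ) + 1, hk⟩ : Fin n) := by
      intro h
      have : (k : ℕ) = (k : ℕ) + 1 := congrArg Fin.val h
      omega
    have hswap : execFun (Sum.swap) F.2 = F.2 := execFun_eq (execR_swap F.2)
    have hu : execFun (cupcap k ⟨(k : ℕ) + 1, hk⟩) F.2 = F.2 :=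
      execFun_eq (execR_cupcap hF.1.1 hne hcup)
    have hcomp : TLcomp ((Z (cupcap k ⟨(k : ℕ) + 1, hk⟩) F.2, Sum.swap) : TLHom n n) F
        = TLcomp ((0, cupcap k ⟨(k : ℕ) + 1, hk⟩) : TLHom n n) F := by
      show (Z (cupcap k ⟨(k : ℕ) + 1, hk⟩) F.2 + F.1 + Z Sum.swap F.2, execFun Sum.swap F.2)
        = (0 + F.1 + Z (cupcap k ⟨(k : ℕ) + 1, hk⟩) F.2,
            execFun (cupcap k ⟨(k : ℕ) + 1, hk⟩) F.2)
      rw [hswap, hu, Z_swap]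
      simp only [Prod.mk.injEq]
      exact ⟨by omega, trivial⟩
    have hgh := hm n (Z (cupcap k ⟨(k : ℕ) + 1, hk⟩) F.2, Sum.swap)
      (0, cupcap k ⟨(k : ℕ) + 1, hk⟩) swap_planar (cupcap_planar k hk) hcomp
    have h2 : (Sum.swap : Fin n ⊕ Fin n → Fin n ⊕ Fin n) = cupcap k ⟨(k : ℕ) + 1, hk⟩ :=
      congrArg Prod.snd hgh
    have h4 : (Sum.inr k : Fin n ⊕ Fin n) = cupcap k ⟨(k : ℕ) + 1, hk⟩ (Sum.inl k) :=
      congrFun h2 (Sum.inl k)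
    rw [cupcap_inl, if_pos rfl] at h4
    exact absurd h4 (by simp)
  · -- no cups → Monic
    intro hnc0 p G H hG hH heq
    have hnc : ∀ b j, F.2 (Sum.inl b) ≠ Sum.inl j := fun b j h => hnc0 ⟨b, j, h⟩
    have hZG : Z G.2 F.2 = 0 := Z_eq_zero (fun i j h => by
      obtain ⟨c, _, h2⟩ := (comp_iff' _ _ _ _).1 h
      exact hnc _ _ h2)
    have hZH : Z H.2 F.2 = 0 := Z_eq_zero (fun i j h => by
      obtain ⟨c, _, h2⟩ := (comp_iff' _ _ _ _).1 h
      exact hnc _ _ h2)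
    have heG : execFun G.2 F.2 = Phi G.2 F.2 := execFun_eq (execR_nocup _ _ hnc)
    have heH : execFun H.2 F.2 = Phi H.2 F.2 := execFun_eq (execR_nocup _ _ hnc)
    have h1 : G.1 + F.1 + Z G.2 F.2 = H.1 + F.1 + Z H.2 F.2 := congrArg Prod.fst heq
    have h2 : execFun G.2 F.2 = execFun H.2 F.2 := congrArg Prod.snd heq
    rw [hZG, hZH] at h1
    rw [heG, heH] at h2
    have hsnd : G.2 = H.2 := Phi_inj hF.1.1.injective hF.1.1 hnc _ _ h2
    have hfst : G.1 = H.1 := by omega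
    exact Prod.ext hfst hsnd
end

section
/- Every morphism f : n → m in the Temperley-Lieb diagram category D factors as f = m' ∘ e where e : n → k is epic (has no caps) and m' : k → m is monic (has no cups); here if f has p cups and q caps then k = n − 2p = m − 2q. -/
open Sum Relation

/-- The number of cups of `f` (pairs of matched top-row elements). -/
noncomputable def numCups {n m : ℕ} (f : Fin n ⊕ Fin m → Fin n ⊕ Fin m) : ℕ :=
  {i : Fin n | ∃ j, i < j ∧ f (Sum.inl i) = Sum.inl j}.ncard

/-- The number of caps of `f` (pairs of matched bottom-row elements). -/
noncomputable def numCaps {n m : ℕ} (f : Fin n ⊕ Fin m → Fin n ⊕ Fin m) : ℕ :=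
  {i : Fin m | ∃ j, i < j ∧ f (Sum.inr i) = Sum.inr j}.ncard

/-!
A planar involution `f : n → m` has `k` through strands, and by (PL2) they do not cross: the
`r`-th through point of the top row is joined to the `r`-th through point of the bottom row.
The epic part `n → k` keeps the cups of `f` and bends the through strands onto `k` points; the
monic part `k → m` is the same construction applied to `f` turned upside down, so it keeps the
caps. Their composite forms no closed loops and reproduces `f` strand by strand.

A cap-free diagram `e` matches every bottom point with a top point, so in a composite `e ; g`
every point of `g` can be read off at its partner: `g` is recovered from `e ; g`, and no loops
are formed. Hence cap-free diagrams are epic and, dually, cup-free diagrams are monic. Counting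
points gives `n = k + 2 * #cups` and `m = k + 2 * #caps`.
-/

open Function

section Conj

variable {X Y : Type*} [Preorder X] [Preorder Y] (φ : X ≃o Y) {f : X → X}

theorem FPF.conj (hf : FPF f) : FPF (φ ∘ f ∘ φ.symm) :=
  ⟨fun x => by simp [hf.1 _],
    fun x h => hf.2 (φ.symm x) (by simpa [eq_comm] using congrArg φ.symm h)⟩

theorem Incomp.map {x y : X} (h : Incomp x y) : Incomp (φ x) (φ y) := by
  simpa [Incomp] using h

theorem PL1.conj (hf : PL1 f) : PL1 (φ ∘ f ∘ φ.symm) := by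
  intro i j hij hj
  obtain ⟨h₁, h₂⟩ := hf (φ.symm i) (φ.symm j) (by simpa using hij) (φ.symm_apply_lt.2 hj)
  exact ⟨φ.symm_apply_lt.1 h₁, φ.strictMono h₂⟩

theorem PL2.conj (hf : PL2 f) : PL2 (φ ∘ f ∘ φ.symm) := by
  intro i j hi hij hj
  have := hf (φ.symm i) (φ.symm j) (by simpa using hi.map φ.symm) (by simpa using hij)
    (by simpa using hj.map φ.symm)
  simpa using φ.strictMono this

end Conj

theorem not_incomp_inl_inl {α β : Type*} [LinearOrder α] [Preorder β] (a b : α) :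
    ¬ Incomp (Sum.inl a : α ⊕ β) (Sum.inl b) := by
  simpa [Incomp] using le_of_lt

theorem Sum.swap_eq_iff_eq_swap {α β : Type*} {x : α ⊕ β} {y : β ⊕ α} :
    x.swap = y ↔ x = y.swap :=
  ⟨fun h => by rw [← h, Sum.swap_swap], fun h => by rw [h, Sum.swap_swap]⟩

section Reflect

variable {n m : ℕ}

def reflect {A B : Type*} (f : A ⊕ B → A ⊕ B) : B ⊕ A → B ⊕ A :=
  Sum.swap ∘ f ∘ Sum.swap

theorem reflect_apply_inl {A B : Type*} (f : A ⊕ B → A ⊕ B) (b : B) :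
    reflect f (.inl b) = (f (.inr b)).swap := rfl

theorem reflect_apply_inr {A B : Type*} (f : A ⊕ B → A ⊕ B) (b : A) :
    reflect f (.inr b) = (f (.inl b)).swap := rfl

theorem Planar.reflect {f : Fin n ⊕ Fin m → Fin n ⊕ Fin m} (hf : Planar f) :
    Planar (reflect f) :=
  ⟨hf.1.conj (OrderIso.sumComm (Fin n) (Fin m)), hf.2.1.conj (OrderIso.sumComm (Fin n) (Fin m)),
    hf.2.2.conj (OrderIso.sumComm (Fin n) (Fin m))⟩

theorem hasCup_reflect (f : Fin n ⊕ Fin m → Fin n ⊕ Fin m) :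
    HasCup (reflect f) ↔ HasCap f := by
  simp [HasCup, HasCap, reflect, Sum.swap_eq_iff_eq_swap]

end Reflect

theorem Relation.reflTransGen_iff_eq_of_forall_not {α : Type*} {r : α → α → Prop}
    (h : ∀ a b, ¬ r a b) {a b : α} : Relation.ReflTransGen r a b ↔ a = b := by
  refine ⟨fun hab => ?_, fun hab => hab ▸ .refl⟩
  induction hab with
  | refl => rfl
  | tail _ hr _ => exact absurd hr (h _ _)

@[simp]
theorem Relation.reflTransGen_comp_false_left {α β : Type*} (r : β → α → Prop) (a b : α) :
    Relation.ReflTransGen (Relation.Comp (fun (_ : α) (_ : β) => False) r) a b ↔ a = b :=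
  Relation.reflTransGen_iff_eq_of_forall_not (by simp [Relation.Comp])

@[simp]
theorem Relation.reflTransGen_comp_false_right {α β : Type*} (r : α → β → Prop) (a b : α) :
    Relation.ReflTransGen (Relation.Comp r (fun (_ : β) (_ : α) => False)) a b ↔ a = b :=
  Relation.reflTransGen_iff_eq_of_forall_not (by simp [Relation.Comp])

section Execution

variable {A B C : Type*}

theorem execR_of_cup (f : A ⊕ B → A ⊕ B) (g : B ⊕ C → B ⊕ C) {i j : A}
    (h : f (.inl i) = .inl j) (y : A ⊕ C) :
    ExecR (graphRel f) (graphRel g) (.inl i) y ↔ y = .inl j := by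
  rcases y with k | k <;> simp [ExecR, graphRel, Relation.Comp, h, eq_comm]

theorem execR_of_noCap {e : A ⊕ B → A ⊕ B} {σ : B → A}
    (hσ : ∀ b, e (.inr b) = .inl (σ b)) (hσ' : ∀ b, e (.inl (σ b)) = .inr b)
    (g : B ⊕ C → B ⊕ C) (x : B ⊕ C) (y : A ⊕ C) :
    ExecR (graphRel e) (graphRel g) (Sum.elim (.inl ∘ σ) .inr x) y ↔
      y = Sum.map σ id (g x) := by
  rcases x with b | c <;> rcases y with i | d <;> cases hg : g _ <;>
    simp [ExecR, graphRel, Relation.Comp, hσ, hσ', hg, eq_comm]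

theorem execR_of_noCup {v : B ⊕ C → B ⊕ C} {τ : B → C}
    (hτ : ∀ b, v (.inl b) = .inr (τ b)) (hτ' : ∀ b, v (.inr (τ b)) = .inl b)
    (u : A ⊕ B → A ⊕ B) (x : A ⊕ B) (y : A ⊕ C) :
    ExecR (graphRel u) (graphRel v) (Sum.elim .inl (.inr ∘ τ) x) y ↔
      y = Sum.map id τ (u x) := by
  rcases x with i | b <;> rcases y with j | d <;> cases hu : u _ <;>
    simp [ExecR, graphRel, Relation.Comp, hτ, hτ', hu, eq_comm]

end Execution

section Morphisms

variable {n m p : ℕ}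

theorem Z_eq_zero_of_forall_not_cyc {f : Fin n ⊕ Fin m → Fin n ⊕ Fin m}
    {g : Fin m ⊕ Fin p → Fin m ⊕ Fin p} (h : ∀ i j, ¬ Cyc f g i j) : Z f g = 0 := by
  suffices {S : Set (Fin m) | ∃ i, Cyclic (Cyc f g) i ∧ S = cycleOf (Cyc f g) i} = ∅ by
    rw [Z, this, Set.ncard_empty]
  refine Set.eq_empty_of_forall_notMem fun S ⟨i, ⟨k, hk, hik⟩, _⟩ => ?_
  obtain ⟨k, rfl⟩ := Nat.exists_eq_add_one_of_ne_zero hk.ne'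
  obtain ⟨j, hij, -⟩ := hik
  exact h i j hij

theorem Z_eq_zero_of_not_hasCap {f : Fin n ⊕ Fin m → Fin n ⊕ Fin m} (hf : ¬ HasCap f)
    (g : Fin m ⊕ Fin p → Fin m ⊕ Fin p) : Z f g = 0 :=
  Z_eq_zero_of_forall_not_cyc fun i _ ⟨j, hij, _⟩ => hf ⟨i, j, hij⟩

theorem Z_eq_zero_of_not_hasCup (f : Fin n ⊕ Fin m → Fin n ⊕ Fin m)
    {g : Fin m ⊕ Fin p → Fin m ⊕ Fin p} (hg : ¬ HasCup g) : Z f g = 0 :=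
  Z_eq_zero_of_forall_not_cyc fun _ k ⟨j, _, hjk⟩ => hg ⟨j, k, hjk⟩

theorem execFun_eq_of_execR_iff {f : Fin n ⊕ Fin m → Fin n ⊕ Fin m}
    {g : Fin m ⊕ Fin p → Fin m ⊕ Fin p} {x y : Fin n ⊕ Fin p}
    (h : ∀ z, ExecR (graphRel f) (graphRel g) x z ↔ z = y) : execFun f g x = y := by
  have hex : ∃ z, ExecR (graphRel f) (graphRel g) x z := ⟨y, (h y).2 rfl⟩
  rw [execFun, dif_pos hex]
  exact (h _).1 hex.choose_spec

theorem exists_partner_of_not_hasCap {e : Fin n ⊕ Fin m → Fin n ⊕ Fin m}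
    (he : Involutive e) (hcap : ¬ HasCap e) :
    ∃ σ : Fin m → Fin n,
      (∀ b, e (.inr b) = .inl (σ b)) ∧ ∀ b, e (.inl (σ b)) = .inr b := by
  have : ∀ b, ∃ a, e (.inr b) = .inl a := fun b => by
    rcases h : e (.inr b) with a | c
    · exact ⟨a, rfl⟩
    · exact absurd ⟨b, c, h⟩ hcap
  choose σ hσ using this
  exact ⟨σ, hσ, fun b => by rw [← hσ, he]⟩

theorem epic_of_not_hasCap (L : ℕ) {e : Fin n ⊕ Fin m → Fin n ⊕ Fin m}
    (he : Involutive e) (hcap : ¬ HasCap e) : Epic (L, e) := by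
  intro q G H _ _ hGH
  obtain ⟨σ, hσ, hσ'⟩ := exists_partner_of_not_hasCap he hcap
  have hinj : Injective (Sum.map σ (id : Fin q → Fin q)) :=
    Sum.map_injective.2 ⟨fun a b hab => by simpa [hσ'] using congrArg (e ∘ .inl) hab,
      injective_id⟩
  have hcomp (K : TLHom m q) (x) :
      execFun e K.2 (Sum.elim (.inl ∘ σ) .inr x) = Sum.map σ id (K.2 x) :=
    execFun_eq_of_execR_iff (execR_of_noCap hσ hσ' K.2 x)
  refine Prod.ext ?_ (funext fun x => hinj ?_)
  · simpa [TLcomp, Z_eq_zero_of_not_hasCap hcap] using congrArg Prod.fst hGH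
  · rw [← hcomp, ← hcomp]
    exact congrFun (congrArg Prod.snd hGH) _

theorem exists_partner_of_not_hasCup {v : Fin n ⊕ Fin m → Fin n ⊕ Fin m}
    (hv : Involutive v) (hcup : ¬ HasCup v) :
    ∃ τ : Fin n → Fin m,
      (∀ b, v (.inl b) = .inr (τ b)) ∧ ∀ b, v (.inr (τ b)) = .inl b := by
  have : ∀ b, ∃ c, v (.inl b) = .inr c := fun b => by
    rcases h : v (.inl b) with a | c
    · exact absurd ⟨b, a, h⟩ hcup
    · exact ⟨c, rfl⟩
  choose τ hτ using this
  exact ⟨τ, hτ, fun b => by rw [← hτ, hv]⟩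

theorem monic_of_not_hasCup (L : ℕ) {v : Fin n ⊕ Fin m → Fin n ⊕ Fin m}
    (hv : Involutive v) (hcup : ¬ HasCup v) : Monic (L, v) := by
  intro q G H _ _ hGH
  obtain ⟨τ, hτ, hτ'⟩ := exists_partner_of_not_hasCup hv hcup
  have hinj : Injective (Sum.map (id : Fin q → Fin q) τ) :=
    Sum.map_injective.2 ⟨injective_id,
      fun a b hab => by simpa [hτ'] using congrArg (v ∘ .inr) hab⟩
  have hcomp (K : TLHom q n) (x) :
      execFun K.2 v (Sum.elim .inl (.inr ∘ τ) x) = Sum.map id τ (K.2 x) :=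
    execFun_eq_of_execR_iff (execR_of_noCup hτ hτ' K.2 x)
  refine Prod.ext ?_ (funext fun x => hinj ?_)
  · simpa [TLcomp, Z_eq_zero_of_not_hasCup _ hcup] using congrArg Prod.fst hGH
  · rw [← hcomp, ← hcomp]
    exact congrFun (congrArg Prod.snd hGH) _

end Morphisms

section Factorization

variable {n m k : ℕ} (f : Fin n ⊕ Fin m → Fin n ⊕ Fin m)

def throughTop : Finset (Fin n) := Finset.univ.filter fun i => (f (.inl i)).isRight

@[simp]
theorem mem_throughTop {i : Fin n} : i ∈ throughTop f ↔ (f (.inl i)).isRight := by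
  simp [throughTop]

/-- Keeps the cups of `f` and joins the `r`-th through point of the top row of `f` to the
bottom point `r`. -/
noncomputable def epicPart (hk : (throughTop f).card = k) : Fin n ⊕ Fin k → Fin n ⊕ Fin k
  | .inl i =>
    if h : i ∈ throughTop f then .inr (((throughTop f).orderIsoOfFin hk).symm ⟨i, h⟩)
    else .inl ((f (.inl i)).getLeft (by simpa using h))
  | .inr r => .inl ((throughTop f).orderEmbOfFin hk r)

variable (hk : (throughTop f).card = k)

theorem exists_orderEmbOfFin_or_cup (i : Fin n) :
    (∃ r, (throughTop f).orderEmbOfFin hk r = i) ∨ ∃ j, f (.inl i) = .inl j := by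
  by_cases h : i ∈ throughTop f
  · rw [← Finset.mem_coe, ← (throughTop f).range_orderEmbOfFin hk] at h
    exact .inl h
  · exact .inr (Sum.isLeft_iff.1 (by simpa using h))

theorem epicPart_inr (r : Fin k) :
    epicPart f hk (.inr r) = .inl ((throughTop f).orderEmbOfFin hk r) := rfl

theorem epicPart_inl_orderEmbOfFin (r : Fin k) :
    epicPart f hk (.inl ((throughTop f).orderEmbOfFin hk r)) = .inr r := by
  have hr := (throughTop f).orderEmbOfFin_mem hk r
  simp only [epicPart, dif_pos hr, Sum.inr.injEq]
  exact ((throughTop f).orderIsoOfFin hk).symm_apply_eq.2 (Subtype.ext rfl)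

variable {f} in
theorem epicPart_inl_of_eq_inl {i j : Fin n} (h : f (.inl i) = .inl j) :
    epicPart f hk (.inl i) = .inl j := by
  have hi : i ∉ throughTop f := by simp [h]
  simp [epicPart, hi, h]

theorem not_hasCap_epicPart : ¬ HasCap (epicPart f hk) := by
  rintro ⟨i, j, h⟩
  simp [epicPart_inr] at h

variable {f}

theorem FPF.epicPart (hf : FPF f) : FPF (epicPart f hk) := by
  have hcup {i j : Fin n} (h : f (.inl i) = .inl j) : f (.inl j) = .inl i := by
    rw [← h, hf.1]
  refine ⟨?_, ?_⟩
  · rintro (i | r)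
    · rcases exists_orderEmbOfFin_or_cup f hk i with ⟨r, rfl⟩ | ⟨j, hj⟩
      · rw [epicPart_inl_orderEmbOfFin, epicPart_inr]
      · rw [epicPart_inl_of_eq_inl hk hj, epicPart_inl_of_eq_inl hk (hcup hj)]
    · rw [epicPart_inr, epicPart_inl_orderEmbOfFin]
  · rintro (i | r)
    · rcases exists_orderEmbOfFin_or_cup f hk i with ⟨r, rfl⟩ | ⟨j, hj⟩
      · simp [epicPart_inl_orderEmbOfFin]
      · rw [epicPart_inl_of_eq_inl hk hj]
        rintro ⟨⟩
        exact hf.2 _ hj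
    · simp [epicPart_inr]

theorem PL1.epicPart (hf : PL1 f) : PL1 (epicPart f hk) := by
  rintro (a | r) (b | s) hab hb
  · rcases exists_orderEmbOfFin_or_cup f hk a with ⟨r, rfl⟩ | ⟨c, hc⟩
    · simp [epicPart_inl_orderEmbOfFin] at hb
    · rw [epicPart_inl_of_eq_inl hk hc] at hb ⊢
      rw [Sum.inl_lt_inl_iff] at hab hb
      obtain ⟨h₁, h₂⟩ := hf (.inl a) (.inl b) (Sum.inl_lt_inl_iff.2 hab)
        (by rw [hc]; exact Sum.inl_lt_inl_iff.2 hb)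
      rcases hd : f (.inl b) with d | d <;> rw [hd, hc] at h₂ <;> rw [hd] at h₁
      · rw [epicPart_inl_of_eq_inl hk hd]
        simp_all
      · simp at h₁
  · simp at hab
  · simp at hab
  · simp [epicPart_inr] at hb

theorem pl2_epicPart : PL2 (epicPart f hk) := by
  rintro (a | r) (b | s) ha hab hb
  · rcases exists_orderEmbOfFin_or_cup f hk a with ⟨r, rfl⟩ | ⟨c, hc⟩
    · rcases exists_orderEmbOfFin_or_cup f hk b with ⟨s, rfl⟩ | ⟨d, hd⟩
      · simpa [epicPart_inl_orderEmbOfFin] using hab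
      · rw [epicPart_inl_of_eq_inl hk hd] at hb
        exact absurd hb (not_incomp_inl_inl _ _)
    · rw [epicPart_inl_of_eq_inl hk hc] at ha
      exact absurd ha (not_incomp_inl_inl _ _)
  · simp at hab
  · simp at hab
  · simpa [epicPart_inr] using hab

theorem Planar.epicPart (hf : Planar f) : Planar (epicPart f hk) :=
  ⟨hf.1.epicPart hk, hf.2.1.epicPart hk, pl2_epicPart hk⟩

end Factorization

section Matching

variable {n m : ℕ} {f : Fin n ⊕ Fin m → Fin n ⊕ Fin m}

theorem numCups_reflect (f : Fin n ⊕ Fin m → Fin n ⊕ Fin m) :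
    numCups (reflect f) = numCaps f := by
  simp [numCups, numCaps, reflect, Sum.swap_eq_iff_eq_swap]

theorem mem_throughTop_reflect {j : Fin m} :
    j ∈ throughTop (reflect f) ↔ (f (.inr j)).isLeft := by
  simp [reflect]

theorem card_throughTop_reflect (hf : Involutive f) :
    (throughTop (reflect f)).card = (throughTop f).card := by
  refine Finset.card_bij (fun j hj => (f (.inr j)).getLeft (mem_throughTop_reflect.1 hj))
    (fun j hj => ?_) (fun j hj j' hj' h => ?_) (fun i hi => ?_)
  · simp [hf _]
  · have := congrArg (Sum.inl (β := Fin m)) h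
    rw [Sum.inl_getLeft, Sum.inl_getLeft] at this
    simpa using hf.injective this
  · obtain ⟨j, hj⟩ := Sum.isRight_iff.1 ((mem_throughTop f).1 hi)
    exact ⟨j, mem_throughTop_reflect.2 (by simp [← hj, hf _]), by simp [← hj, hf _]⟩

theorem apply_inl_orderEmbOfFin_throughTop {k : ℕ} (hf : Planar f) (hk : (throughTop f).card = k)
    (hk' : (throughTop (reflect f)).card = k) (r : Fin k) :
    f (.inl ((throughTop f).orderEmbOfFin hk r)) =
      .inr ((throughTop (reflect f)).orderEmbOfFin hk' r) := by
  set σ := (throughTop f).orderEmbOfFin hk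
  have : ∀ r, ∃ c, f (.inl (σ r)) = .inr c := fun r =>
    Sum.isRight_iff.1 ((mem_throughTop f).1 ((throughTop f).orderEmbOfFin_mem hk r))
  choose τ hτ using this
  suffices τ = (throughTop (reflect f)).orderEmbOfFin hk' by rw [hτ, this]
  refine Finset.orderEmbOfFin_unique hk'
    (fun r => mem_throughTop_reflect.2 (by simp [← hτ, hf.1.1 _])) fun r s hrs => ?_
  have := hf.2.2 (.inl (σ r)) (.inl (σ s))
    (by rw [hτ]; exact ⟨Sum.not_inr_le_inl, Sum.not_inl_le_inr⟩)
    (Sum.inl_lt_inl_iff.2 (σ.strictMono hrs))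
    (by rw [hτ]; exact ⟨Sum.not_inl_le_inr, Sum.not_inr_le_inl⟩)
  rwa [hτ, hτ, Sum.inr_lt_inr_iff] at this

end Matching

theorem execFun_epicPart_reflect_epicPart {n m k : ℕ} {f : Fin n ⊕ Fin m → Fin n ⊕ Fin m}
    (hf : Planar f) (hk : (throughTop f).card = k) (hk' : (throughTop (reflect f)).card = k) :
    execFun (epicPart f hk) (reflect (epicPart (reflect f) hk')) = f := by
  have hmatch := apply_inl_orderEmbOfFin_throughTop hf hk hk'
  have hspec := execR_of_noCap (epicPart_inr f hk) (epicPart_inl_orderEmbOfFin f hk)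
    (reflect (epicPart (reflect f) hk'))
  funext x
  refine execFun_eq_of_execR_iff fun z => ?_
  rcases x with i | c
  · rcases exists_orderEmbOfFin_or_cup f hk i with ⟨r, rfl⟩ | ⟨j, hj⟩
    · rw [hmatch]
      exact hspec (.inl r) z
    · rw [hj]
      exact execR_of_cup _ _ (epicPart_inl_of_eq_inl hk hj) z
  · suffices h : Sum.map ((throughTop f).orderEmbOfFin hk) id
        (reflect (epicPart (reflect f) hk') (.inr c)) = f (.inr c) by
      rw [← h]
      exact hspec (.inr c) z
    rcases exists_orderEmbOfFin_or_cup (reflect f) hk' c with ⟨r, rfl⟩ | ⟨d, hd⟩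
    · rw [reflect_apply_inr, epicPart_inl_orderEmbOfFin, ← hmatch, hf.1.1]
      rfl
    · rw [reflect_apply_inr, epicPart_inl_of_eq_inl hk' hd]
      rw [reflect_apply_inl, Sum.swap_eq_iff_eq_swap, Sum.swap_inl] at hd
      simp [hd]

theorem TLcomp_epicPart_reflect_epicPart {n m k : ℕ} (L : ℕ)
    {f : Fin n ⊕ Fin m → Fin n ⊕ Fin m} (hf : Planar f) (hk : (throughTop f).card = k)
    (hk' : (throughTop (reflect f)).card = k) :
    TLcomp (L, epicPart f hk) (0, reflect (epicPart (reflect f) hk')) = (L, f) := by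
  simp only [TLcomp, Z_eq_zero_of_not_hasCap (not_hasCap_epicPart f hk),
    execFun_epicPart_reflect_epicPart hf hk hk', add_zero]
  rfl

theorem Finset.card_eq_two_mul_card_filter_lt {α : Type*} [LinearOrder α] {s : Finset α}
    {g : α → α} (hs : ∀ a ∈ s, g a ∈ s) (hg : ∀ a ∈ s, g (g a) = a)
    (hne : ∀ a ∈ s, g a ≠ a) :
    s.card = 2 * (s.filter fun a => a < g a).card := by
  rw [← s.card_filter_add_card_filter_not (fun a => a < g a), two_mul, add_comm]
  congr 1
  refine Finset.card_nbij' g g (fun a ha => ?_) (fun a ha => ?_) (fun a ha => ?_) (fun a ha => ?_)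
  all_goals simp only [Finset.coe_filter, Set.mem_ofPred_eq, not_lt] at ha ⊢
  · exact ⟨hs a ha.1, by rw [hg a ha.1]; exact lt_of_le_of_ne ha.2 (hne a ha.1)⟩
  · exact ⟨hs a ha.1, by rw [hg a ha.1]; exact ha.2.le⟩
  · exact hg a ha.1
  · exact hg a ha.1

theorem card_throughTop_add_two_mul_numCups {n m : ℕ} {f : Fin n ⊕ Fin m → Fin n ⊕ Fin m}
    (hf : FPF f) : (throughTop f).card + 2 * numCups f = n := by
  let partner i := (f (.inl i)).elim id fun _ => i
  have hpartner {i} (hi : i ∈ (throughTop f)ᶜ) :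
      partner i ∈ (throughTop f)ᶜ ∧ partner (partner i) = i ∧ partner i ≠ i := by
    obtain ⟨j, hj⟩ := Sum.isLeft_iff.1 (by simpa using hi)
    have hji : f (.inl j) = .inl i := by rw [← hj, hf.1]
    refine ⟨by simp [partner, hj, hji], by simp [partner, hj, hji], ?_⟩
    intro h
    exact hf.2 (.inl i) (by simp_all [partner])
  have hnum : numCups f = ((throughTop f)ᶜ.filter fun i => i < partner i).card := by
    rw [numCups, ← Set.ncard_coe_finset]
    congr 1
    ext i
    rcases h : f (.inl i) with j | j <;> simp [partner, h]
  rw [hnum, ← Finset.card_eq_two_mul_card_filter_lt (fun i hi => (hpartner hi).1)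
    (fun i hi => (hpartner hi).2.1) (fun i hi => (hpartner hi).2.2),
    Finset.card_add_card_compl, Fintype.card_fin]

theorem card_throughTop_add_two_mul_numCaps {n m : ℕ} {f : Fin n ⊕ Fin m → Fin n ⊕ Fin m}
    (hf : FPF f) : (throughTop f).card + 2 * numCaps f = m := by
  rw [← card_throughTop_reflect hf.1, ← numCups_reflect]
  exact card_throughTop_add_two_mul_numCups (hf.conj (OrderIso.sumComm (Fin n) (Fin m)))

/-- Every morphism `f : n → m` of `D` factors as `f = m' ∘ e` with
`e : n → k` epic (cap-free) and `m' : k → m` monic (cup-free), where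
`k = n − 2p = m − 2q` for `p` the number of cups and `q` the number of caps
of `f`. -/
theorem stmt_15 (n m : ℕ) (F : TLHom n m) (hF : Planar F.2) :
    ∃ (k : ℕ) (E : TLHom n k) (M : TLHom k m),
      Planar E.2 ∧ Planar M.2 ∧
      Epic E ∧ ¬ HasCap E.2 ∧ Monic M ∧ ¬ HasCup M.2 ∧
      TLcomp E M = F ∧
      n = k + 2 * numCups F.2 ∧ m = k + 2 * numCaps F.2 := by
  obtain ⟨L, f⟩ := F
  have hk' := card_throughTop_reflect hF.1.1
  have hE : Planar (epicPart f rfl) := hF.epicPart rfl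
  have hM : Planar (reflect (epicPart (reflect f) hk')) := (hF.reflect.epicPart hk').reflect
  have hcap := not_hasCap_epicPart f rfl
  have hcup : ¬ HasCup (reflect (epicPart (reflect f) hk')) :=
    (hasCup_reflect _).not.2 (not_hasCap_epicPart _ hk')
  exact ⟨_, (L, epicPart f rfl), (0, reflect (epicPart (reflect f) hk')), hE, hM,
    epic_of_not_hasCap L hE.1.1 hcap, hcap, monic_of_not_hasCup 0 hM.1.1 hcup, hcup,
    TLcomp_epicPart_reflect_epicPart L hF rfl hk',
    (card_throughTop_add_two_mul_numCups hF.1).symm,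
    (card_throughTop_add_two_mul_numCaps hF.1).symm⟩
end
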